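/- arXiv:1412.7116 — 2 statements merged into one kernel-verified Lean document; each statement's English description precedes it below -/
import Mathlib

section
/- Let P ∈ ℝ^{n×n} be doubly stochastic with second largest singular value σ₂(P) < 1; let χ ⊆ ℝ^d be a nonempty compact convex set; let ψ: ℝ^d → ℝ be 1-strongly convex with respect to the Euclidean norm; and let (α_t)_{t≥0} be a positive non-increasing sequence. Suppose g_{i,t} ∈ ℝ^d and matrices A_i together with vectors λ_{i,t} satisfy ‖g_{i,t}‖ ≤ L_f and ‖A_iᵀλ_{i,t}‖ ≤ ζ^max for all i ∈ [n], t ≥ 1. Define z_{i,1} = 0, z_{i,t+1} = Σ_{j=1}^n P_{ji} z_{j,t} + g_{i,t} + A_iᵀλ_{i,t+1}, let z̄_t = (1/n)Σ_{i=1}^n z_{i,t}, and define x_{i,t} = argmin_{x∈χ}{⟨z_{i,t}, x⟩ + (1/α_{t−1})ψ(x)} and θ_t = argmin_{x∈χ}{⟨z̄_t, x⟩ + (1/α_{t−1})ψ(x)}. Then for all i ∈ [n] and t ≥ 1, ‖θ_t − x_{i,t}‖ ≤ α_{t−1}·√n·(L_f + ζ^max)/(1 − σ₂(P)). -/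
open Matrix
open scoped RealInnerProductSpace

/-- The singular values of a square real matrix `M`, namely the square roots of the
eigenvalues of the Hermitian matrix `M * Mᴴ` (with multiplicity, in arbitrary order). -/
noncomputable def singVals {n : ℕ} (M : Matrix (Fin n) (Fin n) ℝ) : Fin n → ℝ :=
  fun i => Real.sqrt ((Matrix.isHermitian_mul_conjTranspose_self M).eigenvalues i)

/-- The second largest singular value (with multiplicity) of a square real matrix. -/
noncomputable def sigma2 {n : ℕ} (M : Matrix (Fin n) (Fin n) ℝ) : ℝ :=
  sSup {s : ℝ | ∃ i j : Fin n, i ≠ j ∧ s = min (singVals M i) (singVals M j)}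

/-- `ψ` is 1-strongly convex with respect to the Euclidean norm. -/
def StronglyConvexOne {d : ℕ} (ψ : EuclideanSpace ℝ (Fin d) → ℝ) : Prop :=
  ∀ x y : EuclideanSpace ℝ (Fin d), ∀ a b : ℝ, 0 ≤ a → 0 ≤ b → a + b = 1 →
    ψ (a • x + b • y) ≤ a * ψ x + b * ψ y - a * b / 2 * ‖x - y‖ ^ 2

/-!
The regularised argmin `z ↦ argmin_{x ∈ χ} ⟪z, x⟫ + α⁻¹ ψ x` is `α`-Lipschitz, because its
objective is `α⁻¹`-strongly convex; hence `‖θ_t - x_{i,t}‖ ≤ α_{t-1} ‖z̄_t - z_{i,t}‖`.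
The deviations `e_t = (z_{i,t} - z̄_t)_i` satisfy `e_{t+1} = Pᵀ e_t + (u_t - ū_t)` with
`u_{i,t} = g_{i,t} + A_iᵀ λ_{i,t+1}`. As `P` is doubly stochastic, the all-ones vector is an
eigenvector of `P Pᵀ` for the eigenvalue `1`, and `σ₂(P) < 1` forces all other eigenvalues to be
at most `σ₂(P)²`; so `Pᵀ` contracts vectors orthogonal to it by the factor `σ₂(P)`. Therefore
`‖e_{t+1}‖ ≤ σ₂(P) ‖e_t‖ + √n (L_f + ζ^max)` and `e_1 = 0` give
`‖e_t‖ ≤ √n (L_f + ζ^max) / (1 - σ₂(P))`.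
-/

section SpectralGap

variable {ι E : Type*} [Fintype ι] [NormedAddCommGroup E] [InnerProductSpace ℝ E]

theorem LinearMap.IsSymmetric.inner_apply_self_le_of_spectralGap {T : E →ₗ[ℝ] E}
    (hT : T.IsSymmetric) (b : OrthonormalBasis ι ℝ E) {μ : ι → ℝ}
    (hb : ∀ k, T (b k) = μ k • b k) {s : ℝ} (hs : s < 1)
    (hgap : ∀ k l, k ≠ l → min (μ k) (μ l) ≤ s)
    {u : E} (hu : u ≠ 0) (hTu : T u = u) {w : E} (hw : ⟪u, w⟫ = 0) :
    ⟪T w, w⟫ ≤ s * ‖w‖ ^ 2 := by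
  have hquad : ⟪T w, w⟫ = ∑ k, μ k * ⟪b k, w⟫ ^ 2 := by
    rw [← b.sum_inner_mul_inner]
    refine Finset.sum_congr rfl fun k _ => ?_
    rw [hT, hb, real_inner_smul_right, real_inner_comm]
    ring
  have horth : ∀ k, μ k ≠ 1 → ⟪b k, u⟫ = 0 := by
    intro k hk
    have h : μ k * ⟪b k, u⟫ = ⟪b k, u⟫ := by
      rw [← real_inner_smul_left, ← hb, hT, hTu]
    by_contra hne
    exact hk ((mul_eq_right₀ hne).1 h)
  rw [hquad, ← b.sum_sq_inner_right, Finset.mul_sum]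
  refine Finset.sum_le_sum fun k _ => ?_
  by_cases hk : μ k ≤ s
  · exact mul_le_mul_of_nonneg_right hk (sq_nonneg _)
  -- `k` carries the only eigenvalue above `s`, so `u` is a multiple of `b k` and `w ⊥ b k`
  have hothers : ∀ l ≠ k, ⟪b l, u⟫ = 0 := fun l hl =>
    horth l (((min_le_iff.1 (hgap k l hl.symm)).resolve_left hk).trans_lt hs).ne
  have hu_eq : u = ⟪b k, u⟫ • b k := by
    conv_lhs => rw [← b.sum_repr' u]
    exact Finset.sum_eq_single k (fun l _ hl => by rw [hothers l hl, zero_smul])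
      (by simp)
  have hcoef : ⟪b k, u⟫ ≠ 0 := fun h => hu (by rw [hu_eq, h, zero_smul])
  have hwk : ⟪b k, w⟫ = 0 := by
    rw [hu_eq, real_inner_smul_left] at hw
    exact (mul_eq_zero.1 hw).resolve_left hcoef
  simp [hwk]

end SpectralGap

section Sigma2

variable {n : ℕ} (P : Matrix (Fin n) (Fin n) ℝ)

theorem sigma2_nonneg : 0 ≤ sigma2 P :=
  Real.sSup_nonneg fun _ ⟨_, _, _, hs⟩ => hs ▸ le_min (Real.sqrt_nonneg _) (Real.sqrt_nonneg _)

theorem min_singVals_le_sigma2 {i j : Fin n} (hij : i ≠ j) :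
    min (singVals P i) (singVals P j) ≤ sigma2 P := by
  refine le_csSup ?_ ⟨i, j, hij, rfl⟩
  refine (Set.finite_range fun p : Fin n × Fin n => min (singVals P p.1) (singVals P p.2))
    |>.subset ?_ |>.bddAbove
  rintro s ⟨i, j, -, rfl⟩
  exact ⟨(i, j), rfl⟩

variable {P}

theorem vecMul_dotProduct_vecMul_le (hProw : ∀ i, ∑ j, P i j = 1) (hPcol : ∀ j, ∑ i, P i j = 1)
    (hσ : sigma2 P < 1) {w : Fin n → ℝ} (hw : ∑ j, w j = 0) :
    (w ᵥ* P) ⬝ᵥ (w ᵥ* P) ≤ sigma2 P ^ 2 * (w ⬝ᵥ w) := by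
  rcases Nat.eq_zero_or_pos n with rfl | hn
  · simp
  have hS := Matrix.isHermitian_mul_conjTranspose_self P
  have hones : (P * Pᴴ) *ᵥ 1 = 1 := by
    have hP : P *ᵥ 1 = 1 := funext fun i => by simp [Matrix.mulVec, dotProduct, hProw]
    have hPt : Pᴴ *ᵥ 1 = 1 := funext fun j => by
      simp [Matrix.mulVec, dotProduct, Matrix.conjTranspose_apply, hPcol]
    rw [← Matrix.mulVec_mulVec, hPt, hP]
  have hgap : ∀ k l, k ≠ l → min (hS.eigenvalues k) (hS.eigenvalues l) ≤ sigma2 P ^ 2 := by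
    intro k l hkl
    have h := min_singVals_le_sigma2 P hkl
    rw [singVals, singVals, ← Real.sqrt_monotone.map_min] at h
    exact (Real.sqrt_le_iff.1 h).2
  have key := (Matrix.isSymmetric_toEuclideanLin_iff.2 hS).inner_apply_self_le_of_spectralGap
    hS.eigenvectorBasis (fun k => congrArg (WithLp.toLp 2) (hS.mulVec_eigenvectorBasis k))
    (s := sigma2 P ^ 2) (by nlinarith [sigma2_nonneg P]) hgap
    (u := WithLp.toLp 2 1) (by simpa [funext_iff] using ⟨⟨0, hn⟩⟩)
    (congrArg (WithLp.toLp 2) hones) (w := WithLp.toLp 2 w)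
    (by simpa [PiLp.inner_apply] using hw)
  have hquad : ⟪Matrix.toEuclideanLin (P * Pᴴ) (WithLp.toLp 2 w), WithLp.toLp 2 w⟫
      = (w ᵥ* P) ⬝ᵥ (w ᵥ* P) := by
    rw [Matrix.toLpLin_apply, EuclideanSpace.inner_eq_star_dotProduct]
    simp [Matrix.conjTranspose_eq_transpose_of_trivial, ← Matrix.mulVec_mulVec,
      Matrix.dotProduct_mulVec, Matrix.mulVec_transpose]
  rw [hquad, EuclideanSpace.real_norm_sq_eq] at key
  simpa [dotProduct, sq] using key

end Sigma2

section StrongConvexity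

open Filter Topology

theorem StronglyConvexOne.strongConvexOn {d : ℕ} {ψ : EuclideanSpace ℝ (Fin d) → ℝ}
    (hψ : StronglyConvexOne ψ) {s : Set (EuclideanSpace ℝ (Fin d))} (hs : Convex ℝ s) :
    StrongConvexOn s 1 ψ :=
  ⟨hs, fun x _ y _ a b ha hb hab =>
    (hψ x y a b ha hb hab).trans_eq (by simp only [smul_eq_mul]; ring)⟩

variable {E : Type*} [NormedAddCommGroup E]

theorem StrongConvexOn.mul_sq_norm_sub_le_of_isMinOn [NormedSpace ℝ E] {s : Set E} {m : ℝ}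
    {f : E → ℝ} (hf : StrongConvexOn s m f) {x y : E} (hx : x ∈ s) (hy : y ∈ s)
    (hmin : IsMinOn f s x) : m / 2 * ‖x - y‖ ^ 2 ≤ f y - f x := by
  set Q := m / 2 * ‖x - y‖ ^ 2
  -- compare `f x` with `f` at the point `(1 - a) • x + a • y`, then let `a → 0⁺`
  have hsegment : ∀ a ∈ Set.Ioo (0 : ℝ) 1, (1 - a) * Q ≤ f y - f x := by
    rintro a ⟨ha0, ha1⟩
    have hconv := hf.2 hx hy (sub_nonneg.2 ha1.le) ha0.le (sub_add_cancel 1 a)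
    have hle := isMinOn_iff.1 hmin _
      (hf.1 hx hy (sub_nonneg.2 ha1.le) ha0.le (sub_add_cancel 1 a))
    simp only [smul_eq_mul] at hconv
    refine le_of_mul_le_mul_left ?_ ha0
    linear_combination hle + hconv
  have hlim : Tendsto (fun a : ℝ => (1 - a) * Q) (𝓝[>] 0) (𝓝 Q) := by
    have : Tendsto (fun a : ℝ => (1 - a) * Q) (𝓝 0) (𝓝 ((1 - 0) * Q)) :=
      ((continuous_const.sub continuous_id).mul continuous_const).tendsto 0
    simpa using this.mono_left nhdsWithin_le_nhds
  refine le_of_tendsto hlim ?_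
  filter_upwards [Ioo_mem_nhdsGT one_pos] with a ha using hsegment a ha

variable [InnerProductSpace ℝ E] {s : Set E}

theorem StrongConvexOn.inner_add_const_mul {m c : ℝ} {ψ : E → ℝ} (hψ : StrongConvexOn s m ψ)
    (hc : 0 ≤ c) (z : E) : StrongConvexOn s (c * m) fun w => ⟪z, w⟫ + c * ψ w := by
  refine ⟨hψ.1, fun x hx y hy a b ha hb hab => ?_⟩
  have h := mul_le_mul_of_nonneg_left (hψ.2 hx hy ha hb hab) hc
  simp only [smul_eq_mul] at h ⊢
  rw [inner_add_right, real_inner_smul_right, real_inner_smul_right]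
  linear_combination h

theorem norm_sub_le_of_isMinOn_inner_add {ψ : E → ℝ} (hψ : StrongConvexOn s 1 ψ) {η : ℝ}
    (hη : 0 < η) {z z' x x' : E} (hx : x ∈ s) (hx' : x' ∈ s)
    (hmin : IsMinOn (fun w => ⟪z, w⟫ + η⁻¹ * ψ w) s x)
    (hmin' : IsMinOn (fun w => ⟪z', w⟫ + η⁻¹ * ψ w) s x') :
    ‖x - x'‖ ≤ η * ‖z - z'‖ := by
  have h := (hψ.inner_add_const_mul (inv_nonneg.2 hη.le) z).mul_sq_norm_sub_le_of_isMinOn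
    hx hx' hmin
  have h' := (hψ.inner_add_const_mul (inv_nonneg.2 hη.le) z').mul_sq_norm_sub_le_of_isMinOn
    hx' hx hmin'
  rw [norm_sub_rev] at h'
  have hsum : η⁻¹ * ‖x - x'‖ ^ 2 ≤ ‖z - z'‖ * ‖x - x'‖ := calc
    η⁻¹ * ‖x - x'‖ ^ 2 ≤ ⟪z - z', x' - x⟫ := by
      simp only [inner_sub_left, inner_sub_right] at h h' ⊢
      linarith
    _ ≤ ‖z - z'‖ * ‖x' - x‖ := real_inner_le_norm _ _
    _ = ‖z - z'‖ * ‖x - x'‖ := by rw [norm_sub_rev x']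
  rcases (norm_nonneg (x - x')).eq_or_lt with h0 | h0
  · rw [← h0]; positivity
  · rw [sq, ← mul_assoc, mul_le_mul_iff_left₀ h0, inv_mul_le_iff₀ hη] at hsum
    exact hsum

end StrongConvexity

theorem le_div_one_sub_of_le_mul_add {a : ℕ → ℝ} {σ c : ℝ} {t₀ : ℕ} (hσ0 : 0 ≤ σ) (hσ1 : σ < 1)
    (h₀ : a t₀ ≤ c / (1 - σ)) (hstep : ∀ t ≥ t₀, a (t + 1) ≤ σ * a t + c) {t : ℕ}
    (ht : t₀ ≤ t) : a t ≤ c / (1 - σ) := by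
  induction t, ht using Nat.le_induction with
  | base => exact h₀
  | succ t ht ih =>
    calc a (t + 1) ≤ σ * a t + c := hstep t ht
      _ ≤ σ * (c / (1 - σ)) + c := by gcongr
      _ = c / (1 - σ) := by field_simp [(sub_pos.2 hσ1).ne']; ring

namespace Consensus

variable {n : ℕ} {E : Type*}

section Module

variable [AddCommGroup E] [Module ℝ E]

def mix (P : Matrix (Fin n) (Fin n) ℝ) (z : Fin n → E) : Fin n → E :=
  fun i => ∑ j, P j i • z j

noncomputable def deviation (z : Fin n → E) : Fin n → E :=
  fun i => z i - (n : ℝ)⁻¹ • ∑ j, z j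

theorem sum_deviation (z : Fin n → E) : ∑ i, deviation z i = 0 := by
  rcases Nat.eq_zero_or_pos n with rfl | hn
  · simp
  have hn0 : (n : ℝ) ≠ 0 := by positivity
  simp only [deviation, Finset.sum_sub_distrib, Finset.sum_const, Finset.card_univ,
    Fintype.card_fin, ← Nat.cast_smul_eq_nsmul ℝ, smul_smul, mul_inv_cancel₀ hn0, one_smul,
    sub_self]

variable {P : Matrix (Fin n) (Fin n) ℝ}

theorem deviation_mix_add (hProw : ∀ i, ∑ j, P i j = 1) (hPcol : ∀ j, ∑ i, P i j = 1)
    (z u : Fin n → E) : deviation (mix P z + u) = mix P (deviation z) + deviation u := by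
  have hsum : ∑ i, mix P z i = ∑ j, z j := by
    simp only [mix]
    rw [Finset.sum_comm]
    simp [← Finset.sum_smul, hProw]
  funext i
  simp only [deviation, Pi.add_apply, Finset.sum_add_distrib, hsum]
  simp only [mix, deviation, smul_sub, Finset.sum_sub_distrib, ← Finset.sum_smul, hPcol,
    one_smul, smul_add]
  abel

end Module

theorem norm_toLp_le_sqrt_mul [SeminormedAddCommGroup E] {u : Fin n → E} {C : ℝ} (hC : 0 ≤ C)
    (hu : ∀ i, ‖u i‖ ≤ C) : ‖WithLp.toLp 2 u‖ ≤ √n * C := by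
  refine (sq_le_sq₀ (norm_nonneg _) (by positivity)).1 ?_
  calc ‖WithLp.toLp 2 u‖ ^ 2 = ∑ i, ‖u i‖ ^ 2 := PiLp.norm_sq_eq_of_L2 _ _
    _ ≤ ∑ _i : Fin n, C ^ 2 :=
        Finset.sum_le_sum fun i _ => pow_le_pow_left₀ (norm_nonneg _) (hu i) 2
    _ = (√n * C) ^ 2 := by simp [mul_pow]

variable [NormedAddCommGroup E] [InnerProductSpace ℝ E] {P : Matrix (Fin n) (Fin n) ℝ}

theorem norm_deviation_le (u : Fin n → E) :
    ‖WithLp.toLp 2 (deviation u)‖ ≤ ‖WithLp.toLp 2 u‖ := by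
  set c : Fin n → E := fun _ => (n : ℝ)⁻¹ • ∑ j, u j
  have hsplit : WithLp.toLp 2 u = WithLp.toLp 2 (deviation u) + WithLp.toLp 2 c := by
    rw [← WithLp.toLp_add]
    congr 1
    funext i
    simp [deviation, c]
  have horth : ⟪WithLp.toLp 2 (deviation u), WithLp.toLp 2 c⟫ = 0 := by
    rw [PiLp.inner_apply]
    simp only [c, ← sum_inner, sum_deviation, inner_zero_left]
  rw [hsplit]
  refine (sq_le_sq₀ (norm_nonneg _) (norm_nonneg _)).1 ?_
  rw [norm_add_sq_real, horth]
  linarith [sq_nonneg ‖WithLp.toLp 2 c‖]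

theorem norm_mix_le [FiniteDimensional ℝ E] (hProw : ∀ i, ∑ j, P i j = 1)
    (hPcol : ∀ j, ∑ i, P i j = 1) (hσ : sigma2 P < 1) {e : Fin n → E} (he : ∑ i, e i = 0) :
    ‖WithLp.toLp 2 (mix P e)‖ ≤ sigma2 P * ‖WithLp.toLp 2 e‖ := by
  let b := stdOrthonormalBasis ℝ E
  -- the `k`-th coordinates of the nodes, to which the scalar bound applies
  let w : _ → Fin n → ℝ := fun k j => ⟪b k, e j⟫
  have hw : ∀ k, ∑ j, w k j = 0 := fun k => by simp only [w, ← inner_sum, he, inner_zero_right]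
  have hmix : ∀ k i, ⟪b k, mix P e i⟫ = (w k ᵥ* P) i := fun k i => by
    simp only [mix, inner_sum, real_inner_smul_right, Matrix.vecMul, dotProduct, w, mul_comm]
  refine (sq_le_sq₀ (norm_nonneg _) (mul_nonneg (sigma2_nonneg P) (norm_nonneg _))).1 ?_
  calc ‖WithLp.toLp 2 (mix P e)‖ ^ 2
      = ∑ k, (w k ᵥ* P) ⬝ᵥ (w k ᵥ* P) := by
        simp only [PiLp.norm_sq_eq_of_L2, ← b.sum_sq_inner_right, hmix, dotProduct, ← sq]
        exact Finset.sum_comm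
    _ ≤ ∑ k, sigma2 P ^ 2 * (w k ⬝ᵥ w k) :=
        Finset.sum_le_sum fun k _ => vecMul_dotProduct_vecMul_le hProw hPcol hσ (hw k)
    _ = (sigma2 P * ‖WithLp.toLp 2 e‖) ^ 2 := by
        simp only [mul_pow, ← Finset.mul_sum, PiLp.norm_sq_eq_of_L2, ← b.sum_sq_inner_right,
          dotProduct, ← sq, w]
        rw [Finset.sum_comm]

theorem norm_deviation_le_of_gossip [FiniteDimensional ℝ E] (hProw : ∀ i, ∑ j, P i j = 1)
    (hPcol : ∀ j, ∑ i, P i j = 1) (hσ : sigma2 P < 1) {z u : ℕ → Fin n → E} {C : ℝ}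
    (hC : 0 ≤ C) (hz₁ : deviation (z 1) = 0) (hz : ∀ t ≥ 1, z (t + 1) = mix P (z t) + u t)
    (hu : ∀ t ≥ 1, ∀ i, ‖u t i‖ ≤ C) {t : ℕ} (ht : 1 ≤ t) : ‖WithLp.toLp 2 (deviation (z t))‖ ≤ √n * C / (1 - sigma2 P) := by
  refine le_div_one_sub_of_le_mul_add (a := fun t => ‖WithLp.toLp 2 (deviation (z t))‖)
    (sigma2_nonneg P) hσ ?_ (fun s hs => ?_) ht
  · rw [hz₁, WithLp.toLp_zero, norm_zero]
    exact div_nonneg (by positivity) (sub_nonneg.2 hσ.le)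
  calc ‖WithLp.toLp 2 (deviation (z (s + 1)))‖
      = ‖WithLp.toLp 2 (mix P (deviation (z s))) + WithLp.toLp 2 (deviation (u s))‖ := by
        rw [hz s hs, deviation_mix_add hProw hPcol, WithLp.toLp_add]
    _ ≤ sigma2 P * ‖WithLp.toLp 2 (deviation (z s))‖ + √n * C :=
        (norm_add_le _ _).trans (add_le_add
          (norm_mix_le hProw hPcol hσ (sum_deviation _))
          ((norm_deviation_le _).trans (norm_toLp_le_sqrt_mul hC (hu s hs))))

end Consensus

theorem stmt_7_general {n d : ℕ} (P : Matrix (Fin n) (Fin n) ℝ)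
    (hProw : ∀ i, ∑ j, P i j = 1)
    (hPcol : ∀ j, ∑ i, P i j = 1)
    (hσ : sigma2 P < 1)
    (χ : Set (EuclideanSpace ℝ (Fin d)))
    (hχconv : Convex ℝ χ)
    (ψ : EuclideanSpace ℝ (Fin d) → ℝ) (hψ : StronglyConvexOne ψ)
    (α : ℕ → ℝ) (hαpos : ∀ t, 0 < α t)
    (m : Fin n → ℕ)
    (A : ∀ i : Fin n, Matrix (Fin (m i)) (Fin d) ℝ)
    (g : Fin n → ℕ → EuclideanSpace ℝ (Fin d))
    (lam : ∀ i : Fin n, ℕ → EuclideanSpace ℝ (Fin (m i)))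
    (Lf ζmax : ℝ)
    (hg : ∀ i : Fin n, ∀ t : ℕ, 1 ≤ t → ‖g i t‖ ≤ Lf)
    (hlam : ∀ i : Fin n, ∀ t : ℕ, 1 ≤ t →
      ‖Matrix.toEuclideanLin (A i)ᵀ (lam i t)‖ ≤ ζmax)
    (z : Fin n → ℕ → EuclideanSpace ℝ (Fin d))
    (hz1 : ∀ i, z i 1 = 0)
    (hzrec : ∀ i : Fin n, ∀ t : ℕ, 1 ≤ t →
      z i (t + 1) = (∑ j, P j i • z j t) + g i t
        + Matrix.toEuclideanLin (A i)ᵀ (lam i (t + 1)))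
    (x : Fin n → ℕ → EuclideanSpace ℝ (Fin d)) (θ : ℕ → EuclideanSpace ℝ (Fin d))
    (hxmem : ∀ i : Fin n, ∀ t : ℕ, 1 ≤ t → x i t ∈ χ)
    (hxmin : ∀ i : Fin n, ∀ t : ℕ, 1 ≤ t → ∀ w ∈ χ,
      ⟪z i t, x i t⟫ + (α (t - 1))⁻¹ * ψ (x i t)
        ≤ ⟪z i t, w⟫ + (α (t - 1))⁻¹ * ψ w)
    (hθmem : ∀ t : ℕ, 1 ≤ t → θ t ∈ χ)
    (hθmin : ∀ t : ℕ, 1 ≤ t → ∀ w ∈ χ,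
      ⟪(n : ℝ)⁻¹ • ∑ j, z j t, θ t⟫ + (α (t - 1))⁻¹ * ψ (θ t)
        ≤ ⟪(n : ℝ)⁻¹ • ∑ j, z j t, w⟫ + (α (t - 1))⁻¹ * ψ w)
    (i : Fin n) (t : ℕ) (ht : 1 ≤ t) :
    ‖θ t - x i t‖ ≤ α (t - 1) * Real.sqrt n * (Lf + ζmax) / (1 - sigma2 P) := by
  have hC : 0 ≤ Lf + ζmax :=
    add_nonneg ((norm_nonneg _).trans (hg i 1 le_rfl)) ((norm_nonneg _).trans (hlam i 1 le_rfl))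
  have hconsensus := Consensus.norm_deviation_le_of_gossip hProw hPcol hσ hC
    (z := fun t j => z j t)
    (u := fun t j => g j t + Matrix.toEuclideanLin (A j)ᵀ (lam j (t + 1)))
    (by funext j; simp [Consensus.deviation, hz1])
    (fun s hs => funext fun j => by simp [hzrec j s hs, Consensus.mix, add_assoc])
    (fun s hs j => (norm_add_le _ _).trans (add_le_add (hg j s hs) (hlam j (s + 1) (by omega))))
    ht
  have hstab := norm_sub_le_of_isMinOn_inner_add (hψ.strongConvexOn hχconv) (hαpos (t - 1))
    (hθmem t ht) (hxmem i t ht) (isMinOn_iff.2 (hθmin t ht)) (isMinOn_iff.2 (hxmin i t ht))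
  calc ‖θ t - x i t‖ ≤ α (t - 1) * ‖(n : ℝ)⁻¹ • ∑ j, z j t - z i t‖ := hstab
    _ = α (t - 1) * ‖Consensus.deviation (fun j => z j t) i‖ := by rw [norm_sub_rev]; rfl
    _ ≤ α (t - 1) * (√n * (Lf + ζmax) / (1 - sigma2 P)) := by
        gcongr
        · exact (hαpos _).le
        · exact (PiLp.norm_apply_le _ i).trans hconsensus
    _ = α (t - 1) * Real.sqrt n * (Lf + ζmax) / (1 - sigma2 P) := by ring

/-- network-effect bound for OD-ADMM via distributed dual averaging:
`‖θ_t - x_{i,t}‖ ≤ α_{t-1} √n (L_f + ζ^max)/(1 - σ₂(P))`. -/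
theorem stmt_7 {n d : ℕ} (P : Matrix (Fin n) (Fin n) ℝ)
    (hPnn : ∀ i j, 0 ≤ P i j)
    (hProw : ∀ i, ∑ j, P i j = 1)
    (hPcol : ∀ j, ∑ i, P i j = 1)
    (hσ : sigma2 P < 1)
    (χ : Set (EuclideanSpace ℝ (Fin d)))
    (hχne : χ.Nonempty) (hχcomp : IsCompact χ) (hχconv : Convex ℝ χ)
    (ψ : EuclideanSpace ℝ (Fin d) → ℝ) (hψ : StronglyConvexOne ψ)
    (α : ℕ → ℝ) (hαpos : ∀ t, 0 < α t) (hαmono : ∀ s t : ℕ, s ≤ t → α t ≤ α s)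
    (m : Fin n → ℕ)
    (A : ∀ i : Fin n, Matrix (Fin (m i)) (Fin d) ℝ)
    (g : Fin n → ℕ → EuclideanSpace ℝ (Fin d))
    (lam : ∀ i : Fin n, ℕ → EuclideanSpace ℝ (Fin (m i)))
    (Lf ζmax : ℝ)
    (hg : ∀ i : Fin n, ∀ t : ℕ, 1 ≤ t → ‖g i t‖ ≤ Lf)
    (hlam : ∀ i : Fin n, ∀ t : ℕ, 1 ≤ t →
      ‖Matrix.toEuclideanLin (A i)ᵀ (lam i t)‖ ≤ ζmax)
    (z : Fin n → ℕ → EuclideanSpace ℝ (Fin d))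
    (hz1 : ∀ i, z i 1 = 0)
    (hzrec : ∀ i : Fin n, ∀ t : ℕ, 1 ≤ t →
      z i (t + 1) = (∑ j, P j i • z j t) + g i t
        + Matrix.toEuclideanLin (A i)ᵀ (lam i (t + 1)))
    (x : Fin n → ℕ → EuclideanSpace ℝ (Fin d)) (θ : ℕ → EuclideanSpace ℝ (Fin d))
    (hxmem : ∀ i : Fin n, ∀ t : ℕ, 1 ≤ t → x i t ∈ χ)
    (hxmin : ∀ i : Fin n, ∀ t : ℕ, 1 ≤ t → ∀ w ∈ χ,
      ⟪z i t, x i t⟫ + (α (t - 1))⁻¹ * ψ (x i t)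
        ≤ ⟪z i t, w⟫ + (α (t - 1))⁻¹ * ψ w)
    (hθmem : ∀ t : ℕ, 1 ≤ t → θ t ∈ χ)
    (hθmin : ∀ t : ℕ, 1 ≤ t → ∀ w ∈ χ,
      ⟪(n : ℝ)⁻¹ • ∑ j, z j t, θ t⟫ + (α (t - 1))⁻¹ * ψ (θ t)
        ≤ ⟪(n : ℝ)⁻¹ • ∑ j, z j t, w⟫ + (α (t - 1))⁻¹ * ψ w)
    (i : Fin n) (t : ℕ) (ht : 1 ≤ t) :
    ‖θ t - x i t‖ ≤ α (t - 1) * Real.sqrt n * (Lf + ζmax) / (1 - sigma2 P) :=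
  stmt_7_general P hProw hPcol hσ χ hχconv ψ hψ α hαpos m A g lam Lf ζmax hg hlam z hz1 hzrec x θ
    hxmem hxmin hθmem hθmin i t ht
end

section
/- Let P ∈ ℝ^{n×n} be doubly stochastic with second largest singular value σ₂(P); let χ ⊆ ℝ^d be a closed convex set containing 0, with Euclidean projection Π_χ; and let (α_t)_{t≥1} be a positive non-increasing sequence. Suppose g_{i,t} ∈ ℝ^d and matrices A_i together with vectors λ_{i,t} satisfy ‖g_{i,t}‖ ≤ L_f and ‖A_iᵀλ_{i,t}‖ ≤ ζ^max for all i ∈ [n], t ≥ 1. Define x_{i,1} = 0 and, for t ≥ 1, h_{i,t+1} = Σ_{j=1}^n P_{ji} x_{j,t} − α_t(g_{i,t} + A_iᵀλ_{i,t+1}) and x_{i,t+1} = Π_χ(h_{i,t+1}); let θ_t = (1/n)Σ_{i=1}^n x_{i,t}. Then for all i ∈ [n] and t ≥ 1, ‖θ_t − x_{i,t}‖ ≤ 2√n·(L_f + ζ^max)·Σ_{k=1}^{t−1} α_{t−k}·σ₂(P)^{k−1}. -/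
/-!
The deviations `x j s - θ s` of the agents from their average obey a linear recursion: they are
mixed by `Pᵀ` and then perturbed by the centred projection errors. Having zero sum, each
coordinate of the deviation is orthogonal to the all-ones vector, a top eigenvector of `P Pᵀ`, so
the mixing contracts it by `σ₂(P)`. Each projection error is at most `2 α_s (L_f + ζ^max)` because
the consensus point `∑ k, P k j • x k s` lies in `χ`. So the Euclidean norm `e s` of the stacked
deviations satisfies `e (s + 1) ≤ σ₂ e s + 2 √n (L_f + ζ^max) α_s` with `e 1 = 0`, and unrolling
this recursion gives the bound.
-/

open Matrix

open Finset
open scoped RealInnerProductSpace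

section Rayleigh

variable {ι : Type*} [Fintype ι]

lemma sum_mul_sq_le_of_sum_mul_eq_zero {μ c d : ι → ℝ} {m : ℝ} (hμ : ∀ i, μ i ≤ 1)
    (hm : ∀ i j, i ≠ j → min (μ i) (μ j) ≤ m) (hd : ∀ i, μ i * d i = d i) (hd0 : d ≠ 0)
    (hdc : ∑ i, d i * c i = 0) :
    ∑ i, μ i * c i ^ 2 ≤ m * ∑ i, c i ^ 2 := by
  obtain ⟨i₀, hi₀⟩ : ∃ i, d i ≠ 0 := by
    by_contra! h
    exact hd0 (funext h)
  have hμ_eq_one : ∀ i, d i ≠ 0 → μ i = 1 := fun i hi => mul_right_cancel₀ hi (by rw [hd, one_mul])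
  by_cases htop : ∃ j ≠ i₀, μ j = 1
  · obtain ⟨j, hj, hμj⟩ := htop
    have hm1 : 1 ≤ m := by simpa [hμ_eq_one i₀ hi₀, hμj] using hm i₀ j (Ne.symm hj)
    calc ∑ i, μ i * c i ^ 2 ≤ ∑ i, c i ^ 2 :=
          sum_le_sum fun i _ => mul_le_of_le_one_left (sq_nonneg _) (hμ i)
      _ ≤ m * ∑ i, c i ^ 2 := le_mul_of_one_le_left (sum_nonneg fun i _ => sq_nonneg _) hm1
  · push Not at htop
    -- `d` is supported at `i₀`, so orthogonality to `d` kills the coefficient `c i₀`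
    have hc : c i₀ = 0 := by
      rw [sum_eq_single i₀ (fun j _ hj => by
        rw [not_imp_comm.1 (hμ_eq_one j) (htop j hj), zero_mul]) (by simp)] at hdc
      exact (mul_eq_zero.1 hdc).resolve_left hi₀
    rw [mul_sum]
    refine sum_le_sum fun j _ => ?_
    rcases eq_or_ne j i₀ with rfl | hj
    · simp [hc]
    · have hμj : μ j ≤ m := by
        simpa [hμ_eq_one i₀ hi₀, min_eq_right (hμ j)] using hm i₀ j (Ne.symm hj)
      exact mul_le_mul_of_nonneg_right hμj (sq_nonneg _)

variable {E : Type*} [NormedAddCommGroup E] [InnerProductSpace ℝ E]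

lemma LinearMap.IsSymmetric.inner_apply_self_eq_sum {T : E →ₗ[ℝ] E} (hT : T.IsSymmetric)
    (b : OrthonormalBasis ι ℝ E) {μ : ι → ℝ} (hb : ∀ i, T (b i) = μ i • b i) (v : E) :
    ⟪T v, v⟫ = ∑ i, μ i * ⟪b i, v⟫ ^ 2 := by
  rw [← b.sum_inner_mul_inner]
  refine sum_congr rfl fun i _ => ?_
  rw [hT, hb, real_inner_smul_right, real_inner_comm]
  ring

lemma LinearMap.IsSymmetric.inner_apply_self_le_of_inner_eq_zero {T : E →ₗ[ℝ] E}
    (hT : T.IsSymmetric) (hT1 : ∀ v, ⟪T v, v⟫ ≤ ‖v‖ ^ 2) (b : OrthonormalBasis ι ℝ E)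
    {μ : ι → ℝ} (hb : ∀ i, T (b i) = μ i • b i) {m : ℝ}
    (hm : ∀ i j, i ≠ j → min (μ i) (μ j) ≤ m) {u : E} (hu0 : u ≠ 0) (hu : T u = u) {w : E}
    (hw : ⟪u, w⟫ = 0) :
    ⟪T w, w⟫ ≤ m * ‖w‖ ^ 2 := by
  have hμ : ∀ i, μ i ≤ 1 := fun i => by
    simpa [hb, real_inner_smul_left, b.orthonormal.1 i] using hT1 (b i)
  have hd : ∀ i, μ i * ⟪b i, u⟫ = ⟪b i, u⟫ := fun i => by
    rw [← real_inner_smul_left, ← hb, hT, hu]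
  have hd0 : (fun i => ⟪b i, u⟫) ≠ 0 := fun h => hu0 <| by
    rw [← b.sum_repr' u]
    simp [funext_iff.1 h]
  have hdc : ∑ i, ⟪b i, u⟫ * ⟪b i, w⟫ = 0 := by
    simpa [real_inner_comm u, b.sum_inner_mul_inner] using hw
  rw [hT.inner_apply_self_eq_sum b hb, ← b.sum_sq_inner_right]
  exact sum_mul_sq_le_of_sum_mul_eq_zero hμ hm hd hd0 hdc

end Rayleigh

lemma min_eigenvalues_le_sigma2_sq {n : ℕ} (M : Matrix (Fin n) (Fin n) ℝ) {i j : Fin n}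
    (hij : i ≠ j) :
    min ((isHermitian_mul_conjTranspose_self M).eigenvalues i)
      ((isHermitian_mul_conjTranspose_self M).eigenvalues j) ≤ sigma2 M ^ 2 := by
  have hfin : {s : ℝ | ∃ i j : Fin n, i ≠ j ∧ s = min (singVals M i) (singVals M j)}.Finite :=
    (Set.finite_range fun p : Fin n × Fin n => min (singVals M p.1) (singVals M p.2)).subset
      (by rintro _ ⟨i, j, -, rfl⟩; exact ⟨(i, j), rfl⟩)
  have h : min (singVals M i) (singVals M j) ≤ sigma2 M := le_csSup hfin.bddAbove ⟨i, j, hij, rfl⟩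
  rw [singVals, singVals, ← Real.sqrt_monotone.map_min] at h
  exact (Real.sqrt_le_iff.1 h).2

lemma sigma2_nonneg_s8 {n : ℕ} (M : Matrix (Fin n) (Fin n) ℝ) : 0 ≤ sigma2 M :=
  Real.sSup_nonneg <| by
    rintro _ ⟨i, j, -, rfl⟩
    exact le_min (Real.sqrt_nonneg _) (Real.sqrt_nonneg _)

lemma norm_toEuclideanLin_le_of_mem_doublyStochastic {ι : Type*} [Fintype ι] [DecidableEq ι]
    {M : Matrix ι ι ℝ}
    (hM : M ∈ doublyStochastic ℝ ι) (v : EuclideanSpace ℝ ι) :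
    ‖toEuclideanLin M v‖ ≤ ‖v‖ := by
  rw [← pow_le_pow_iff_left₀ (norm_nonneg _) (norm_nonneg _) two_ne_zero,
    EuclideanSpace.real_norm_sq_eq, EuclideanSpace.real_norm_sq_eq]
  have hJensen : ∀ i, (toEuclideanLin M v i) ^ 2 ≤ ∑ j, M i j * v j ^ 2 := fun i =>
    (Even.convexOn_pow even_two).map_sum_le (fun j _ => nonneg_of_mem_doublyStochastic hM)
      (sum_row_of_mem_doublyStochastic hM i) (fun _ _ => Set.mem_univ _)
  calc ∑ i, (toEuclideanLin M v i) ^ 2 ≤ ∑ i, ∑ j, M i j * v j ^ 2 :=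
        sum_le_sum fun i _ => hJensen i
    _ = ∑ j, v j ^ 2 := by
      rw [sum_comm]
      simp [← sum_mul, sum_col_of_mem_doublyStochastic hM]

theorem norm_toEuclideanLin_transpose_le_sigma2_mul {n : ℕ} {P : Matrix (Fin n) (Fin n) ℝ}
    (hP : P ∈ doublyStochastic ℝ (Fin n)) {w : EuclideanSpace ℝ (Fin n)} (hw : ∑ i, w i = 0) :
    ‖toEuclideanLin Pᵀ w‖ ≤ sigma2 P * ‖w‖ := by
  rcases isEmpty_or_nonempty (Fin n) with hn | hn
  · simp [Subsingleton.elim w 0]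
  have hQ := isHermitian_mul_conjTranspose_self P
  set T := toEuclideanLin (P * Pᴴ)
  have hT : T.IsSymmetric := isSymmetric_toEuclideanLin_iff.2 hQ
  have hquad : ∀ v, ⟪T v, v⟫ = ‖toEuclideanLin Pᵀ v‖ ^ 2 := fun v => by
    rw [show T v = toEuclideanLin P (toEuclideanLin Pᴴ v) from
      LinearMap.congr_fun (toLpLin_mul 2 2 2 P Pᴴ) v, ← LinearMap.adjoint_inner_right,
      ← toEuclideanLin_conjTranspose_eq_adjoint, conjTranspose_eq_transpose_of_trivial,
      real_inner_self_eq_norm_sq]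
  have hb : ∀ i, T (hQ.eigenvectorBasis i) = hQ.eigenvalues i • hQ.eigenvectorBasis i :=
    fun i => congrArg (WithLp.toLp 2) (hQ.mulVec_eigenvectorBasis i)
  have hPt : Pᵀ ∈ doublyStochastic ℝ (Fin n) := transpose_mem_doublyStochastic_iff.2 hP
  set u : EuclideanSpace ℝ (Fin n) := WithLp.toLp 2 1
  have hu0 : u ≠ 0 := fun h => by simpa [u] using congrArg (· (Classical.arbitrary (Fin n))) h
  have hu : T u = u := by
    change WithLp.toLp 2 ((P * Pᴴ) *ᵥ 1) = WithLp.toLp 2 1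
    rw [← mulVec_mulVec, conjTranspose_eq_transpose_of_trivial,
      mulVec_one_of_mem_doublyStochastic hPt, mulVec_one_of_mem_doublyStochastic hP]
  have hwu : ⟪u, w⟫ = 0 := by simpa [u, PiLp.inner_apply] using hw
  have key := hT.inner_apply_self_le_of_inner_eq_zero
    (fun v => hquad v ▸ pow_le_pow_left₀ (norm_nonneg _)
      (norm_toEuclideanLin_le_of_mem_doublyStochastic hPt v) 2)
    hQ.eigenvectorBasis hb (fun i j hij => min_eigenvalues_le_sigma2_sq P hij) hu0 hu hwu
  rw [hquad, ← mul_pow] at key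
  exact (pow_le_pow_iff_left₀ (norm_nonneg _) (mul_nonneg (sigma2_nonneg_s8 P) (norm_nonneg _))
    two_ne_zero).1 key

lemma norm_toLp_sq_eq_sum_norm_coord_sq {ι κ : Type*} [Fintype ι] [Fintype κ]
    (y : ι → EuclideanSpace ℝ κ) :
    ‖(WithLp.toLp 2 y : PiLp 2 fun _ : ι => EuclideanSpace ℝ κ)‖ ^ 2
      = ∑ l, ‖(WithLp.toLp 2 fun i => y i l : EuclideanSpace ℝ ι)‖ ^ 2 := by
  simp only [PiLp.norm_sq_eq_of_L2]
  exact sum_comm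

theorem norm_toLp_sum_smul_le_sigma2_mul {n : ℕ} {κ : Type*} [Fintype κ]
    {P : Matrix (Fin n) (Fin n) ℝ} (hP : P ∈ doublyStochastic ℝ (Fin n))
    (y : Fin n → EuclideanSpace ℝ κ) (hy : ∑ k, y k = 0) :
    ‖(WithLp.toLp 2 fun j => ∑ k, P k j • y k : PiLp 2 fun _ : Fin n => EuclideanSpace ℝ κ)‖
      ≤ sigma2 P * ‖(WithLp.toLp 2 y : PiLp 2 fun _ : Fin n => EuclideanSpace ℝ κ)‖ := by
  have hcoord : ∀ l, (WithLp.toLp 2 fun j => (∑ k, P k j • y k) l : EuclideanSpace ℝ (Fin n))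
      = toEuclideanLin Pᵀ (WithLp.toLp 2 fun k => y k l) := fun l => by
    ext j
    simp [toLpLin_apply, mulVec, dotProduct]
  have hsum : ∀ l, ∑ k, (WithLp.toLp 2 fun k => y k l : EuclideanSpace ℝ (Fin n)) k = 0 :=
    fun l => by simpa using congrArg (· l) hy
  rw [← pow_le_pow_iff_left₀ (norm_nonneg _) (mul_nonneg (sigma2_nonneg_s8 P) (norm_nonneg _))
    two_ne_zero, mul_pow, norm_toLp_sq_eq_sum_norm_coord_sq, norm_toLp_sq_eq_sum_norm_coord_sq,
    mul_sum]
  refine sum_le_sum fun l _ => ?_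
  rw [hcoord, ← mul_pow]
  exact pow_le_pow_left₀ (norm_nonneg _)
    (norm_toEuclideanLin_transpose_le_sigma2_mul hP (hsum l)) 2

section Average

variable {ι E : Type*} [Fintype ι]

noncomputable def average [AddCommGroup E] [Module ℝ E] (z : ι → E) : E :=
  (Fintype.card ι : ℝ)⁻¹ • ∑ i, z i

lemma sum_sub_average [AddCommGroup E] [Module ℝ E] (z : ι → E) :
    ∑ i, (z i - average z) = 0 := by
  rcases isEmpty_or_nonempty ι with hι | hι
  · simp
  · rw [sum_sub_distrib, sum_const, card_univ, average, ← Nat.cast_smul_eq_nsmul ℝ, smul_smul,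
      mul_inv_cancel₀ (by positivity), one_smul, sub_self]

lemma norm_toLp_sub_average_le [NormedAddCommGroup E] [InnerProductSpace ℝ E] (z : ι → E) :
    ‖(WithLp.toLp 2 fun i => z i - average z : PiLp 2 fun _ : ι => E)‖
      ≤ ‖(WithLp.toLp 2 z : PiLp 2 fun _ : ι => E)‖ := by
  rw [← pow_le_pow_iff_left₀ (norm_nonneg _) (norm_nonneg _) two_ne_zero,
    PiLp.norm_sq_eq_of_L2, PiLp.norm_sq_eq_of_L2]
  set m := average z
  -- Pythagoras: the deviations `z i - m` sum to zero
  calc ∑ i, ‖z i - m‖ ^ 2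
      ≤ ∑ i, (‖z i - m‖ ^ 2 + 2 * ⟪z i - m, m⟫ + ‖m‖ ^ 2) := by
        rw [sum_add_distrib, sum_add_distrib, ← mul_sum, ← sum_inner, sum_sub_average,
          inner_zero_left, mul_zero, add_zero]
        exact le_add_of_nonneg_right (sum_nonneg fun _ _ => sq_nonneg _)
    _ = ∑ i, ‖z i‖ ^ 2 := sum_congr rfl fun i _ => by rw [← norm_add_sq_real, sub_add_cancel]

lemma sub_average_eq_sum_smul_add [AddCommGroup E] [Module ℝ E] [DecidableEq ι]
    {P : Matrix ι ι ℝ} (hP : P ∈ doublyStochastic ℝ ι) (a b : ι → E) (j : ι) :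
    b j - average b = ∑ k, P k j • (a k - average a)
      + ((b j - ∑ k, P k j • a k) - average fun i => b i - ∑ k, P k i • a k) := by
  have hrow : ∑ i, ∑ k, P k i • a k = ∑ k, a k := by
    rw [sum_comm]
    simp [← sum_smul, sum_row_of_mem_doublyStochastic hP]
  have hcol : ∑ k, P k j • (a k - average a) = ∑ k, P k j • a k - average a := by
    simp [smul_sub, sum_sub_distrib, ← sum_smul, sum_col_of_mem_doublyStochastic hP]
  have havg : (average fun i => b i - ∑ k, P k i • a k) = average b - average a := by
    simp only [average, sum_sub_distrib, hrow, smul_sub]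
  rw [hcol, havg]
  abel

end Average

lemma norm_proj_sub_smul_sub_le {E : Type*} [SeminormedAddCommGroup E] [NormedSpace ℝ E]
    {χ : Set E} {proj : E → E} (hproj : ∀ u, ∀ w ∈ χ, ‖u - proj u‖ ≤ ‖u - w‖) {z : E}
    (hz : z ∈ χ) {a L : ℝ} (ha : 0 ≤ a) {v : E} (hv : ‖v‖ ≤ L) :
    ‖proj (z - a • v) - z‖ ≤ 2 * L * a := by
  have hstep : ‖z - a • v - z‖ ≤ L * a := by
    rw [sub_sub_cancel_left, norm_neg, norm_smul, Real.norm_of_nonneg ha, mul_comm]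
    exact mul_le_mul_of_nonneg_right hv ha
  calc ‖proj (z - a • v) - z‖ ≤ ‖z - a • v - proj (z - a • v)‖ + ‖z - a • v - z‖ := by
        rw [norm_sub_rev (z - a • v)]; exact norm_sub_le_norm_sub_add_norm_sub _ _ _
    _ ≤ 2 * L * a := by linarith [hproj (z - a • v) z hz]

lemma le_mul_sum_of_le_mul_add {e α : ℕ → ℝ} {σ c : ℝ} (hσ : 0 ≤ σ) (h1 : e 1 ≤ 0)
    (hstep : ∀ s, 1 ≤ s → e (s + 1) ≤ σ * e s + c * α s) {t : ℕ} (ht : 1 ≤ t) :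
    e t ≤ c * ∑ k ∈ Icc 1 (t - 1), α (t - k) * σ ^ (k - 1) := by
  have hrange : ∀ s, e (s + 1) ≤ c * ∑ k ∈ range s, α (s - k) * σ ^ k := by
    intro s
    induction s with
    | zero => simpa using h1
    | succ s ih =>
      have hsum : ∑ k ∈ range (s + 1), α (s + 1 - k) * σ ^ k
          = σ * ∑ k ∈ range s, α (s - k) * σ ^ k + α (s + 1) := by
        rw [sum_range_succ', mul_sum]
        simp only [Nat.add_sub_add_right, Nat.sub_zero, pow_zero, mul_one]
        exact congrArg (· + _) (sum_congr rfl fun k _ => by ring)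
      calc e (s + 1 + 1) ≤ σ * e (s + 1) + c * α (s + 1) := hstep (s + 1) (by omega)
        _ ≤ σ * (c * ∑ k ∈ range s, α (s - k) * σ ^ k) + c * α (s + 1) := by gcongr
        _ = c * ∑ k ∈ range (s + 1), α (s + 1 - k) * σ ^ k := by rw [hsum]; ring
  obtain ⟨s, rfl⟩ : ∃ s, t = s + 1 := ⟨t - 1, by omega⟩
  rw [← Ico_add_one_right_eq_Icc, sum_Ico_eq_sum_range]
  simp only [Nat.add_sub_cancel]
  refine (hrange s).trans_eq (congrArg _ (sum_congr rfl fun k _ => ?_))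
  rw [show s + 1 - (1 + k) = s - k by omega, Nat.add_sub_cancel_left]

lemma norm_toLp_le_sqrt_card_mul {ι E : Type*} [Fintype ι] [SeminormedAddCommGroup E]
    {z : ι → E} {r : ℝ} (hz : ∀ i, ‖z i‖ ≤ r) :
    ‖(WithLp.toLp 2 z : PiLp 2 fun _ : ι => E)‖ ≤ √(Fintype.card ι) * r := by
  rcases isEmpty_or_nonempty ι with hι | ⟨⟨i⟩⟩
  · simp [PiLp.norm_eq_of_L2]
  have hr : 0 ≤ r := (norm_nonneg _).trans (hz i)
  rw [PiLp.norm_eq_of_L2, ← Real.sqrt_sq hr, ← Real.sqrt_mul (Nat.cast_nonneg _)]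
  refine Real.sqrt_le_sqrt ((sum_le_sum fun i _ => pow_le_pow_left₀ (norm_nonneg _) (hz i) 2).trans
    (by simp))

theorem norm_sub_average_le_sigma2_mul_add {n : ℕ} {κ : Type*} [Fintype κ]
    {P : Matrix (Fin n) (Fin n) ℝ} (hP : P ∈ doublyStochastic ℝ (Fin n))
    (a b : Fin n → EuclideanSpace ℝ κ) {r : ℝ} (hr : ∀ j, ‖b j - ∑ k, P k j • a k‖ ≤ r) :
    ‖(WithLp.toLp 2 fun j => b j - average b : PiLp 2 fun _ : Fin n => EuclideanSpace ℝ κ)‖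
      ≤ sigma2 P
          * ‖(WithLp.toLp 2 fun j => a j - average a : PiLp 2 fun _ : Fin n => EuclideanSpace ℝ κ)‖
        + √n * r := by
  set ε := fun j => b j - ∑ k, P k j • a k
  have hdecomp : (WithLp.toLp 2 fun j => b j - average b : PiLp 2 fun _ => EuclideanSpace ℝ κ)
      = WithLp.toLp 2 (fun j => ∑ k, P k j • (a k - average a))
        + WithLp.toLp 2 (fun j => ε j - average ε) := by
    ext1 j
    exact sub_average_eq_sum_smul_add hP a b j
  rw [hdecomp]
  refine (norm_add_le _ _).trans
    (add_le_add (norm_toLp_sum_smul_le_sigma2_mul hP _ (sum_sub_average a)) ?_)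
  simpa using (norm_toLp_sub_average_le ε).trans (norm_toLp_le_sqrt_card_mul hr)

theorem stmt_8_general {n d : ℕ} (P : Matrix (Fin n) (Fin n) ℝ)
    (hPnn : ∀ i j, 0 ≤ P i j)
    (hProw : ∀ i, ∑ j, P i j = 1)
    (hPcol : ∀ j, ∑ i, P i j = 1)
    (χ : Set (EuclideanSpace ℝ (Fin d)))
    (hχconv : Convex ℝ χ) (hχ0 : (0 : EuclideanSpace ℝ (Fin d)) ∈ χ)
    (proj : EuclideanSpace ℝ (Fin d) → EuclideanSpace ℝ (Fin d))
    (hprojmem : ∀ u, proj u ∈ χ)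
    (hprojclosest : ∀ u, ∀ w ∈ χ, ‖u - proj u‖ ≤ ‖u - w‖)
    (α : ℕ → ℝ) (hαpos : ∀ t : ℕ, 1 ≤ t → 0 < α t)
    (m : Fin n → ℕ)
    (A : ∀ i : Fin n, Matrix (Fin (m i)) (Fin d) ℝ)
    (g : Fin n → ℕ → EuclideanSpace ℝ (Fin d))
    (lam : ∀ i : Fin n, ℕ → EuclideanSpace ℝ (Fin (m i)))
    (Lf ζmax : ℝ)
    (hg : ∀ i : Fin n, ∀ t : ℕ, 1 ≤ t → ‖g i t‖ ≤ Lf)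
    (hlam : ∀ i : Fin n, ∀ t : ℕ, 1 ≤ t →
      ‖Matrix.toEuclideanLin (A i)ᵀ (lam i t)‖ ≤ ζmax)
    (x h : Fin n → ℕ → EuclideanSpace ℝ (Fin d)) (θ : ℕ → EuclideanSpace ℝ (Fin d))
    (hx1 : ∀ i, x i 1 = 0)
    (hhrec : ∀ i : Fin n, ∀ t : ℕ, 1 ≤ t →
      h i (t + 1) = (∑ j, P j i • x j t)
        - α t • (g i t + Matrix.toEuclideanLin (A i)ᵀ (lam i (t + 1))))
    (hxproj : ∀ i : Fin n, ∀ t : ℕ, 1 ≤ t → x i (t + 1) = proj (h i (t + 1)))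
    (hθ : ∀ t : ℕ, θ t = (n : ℝ)⁻¹ • ∑ i, x i t)
    (i : Fin n) (t : ℕ) (ht : 1 ≤ t) :
    ‖θ t - x i t‖ ≤ 2 * Real.sqrt n * (Lf + ζmax)
      * ∑ k ∈ Finset.Icc 1 (t - 1), α (t - k) * sigma2 P ^ (k - 1) := by
  have hP : P ∈ doublyStochastic ℝ (Fin n) := mem_doublyStochastic_iff_sum.2 ⟨hPnn, hProw, hPcol⟩
  have hxχ : ∀ j s, 1 ≤ s → x j s ∈ χ := by
    rintro j (_ | _ | s) hs
    · omega
    · exact hx1 j ▸ hχ0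
    · exact hxproj j (s + 1) (by omega) ▸ hprojmem _
  have hdev : ∀ j s, 1 ≤ s → ‖x j (s + 1) - ∑ k, P k j • x k s‖ ≤ 2 * (Lf + ζmax) * α s := by
    intro j s hs
    rw [hxproj j s hs, hhrec j s hs]
    exact norm_proj_sub_smul_sub_le hprojclosest
      (hχconv.sum_mem (fun k _ => hPnn k j) (hPcol j) fun k _ => hxχ k s hs) (hαpos s hs).le
      ((norm_add_le _ _).trans (add_le_add (hg j s hs) (hlam j (s + 1) (by omega))))
  have hθavg : ∀ s, θ s = average fun j => x j s := fun s => by simp [hθ, average]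
  set e : ℕ → ℝ := fun s => ‖(WithLp.toLp 2 fun j => x j s - average fun k => x k s :
    PiLp 2 fun _ : Fin n => EuclideanSpace ℝ (Fin d))‖
  have he1 : e 1 ≤ 0 := by simp [e, hx1, average, ← Pi.zero_def]
  calc ‖θ t - x i t‖ ≤ e t := by
        rw [norm_sub_rev, hθavg]
        exact PiLp.norm_apply_le (WithLp.toLp 2 fun j => x j t - average fun k => x k t :
          PiLp 2 fun _ : Fin n => EuclideanSpace ℝ (Fin d)) i
    _ ≤ √n * (2 * (Lf + ζmax)) * ∑ k ∈ Icc 1 (t - 1), α (t - k) * sigma2 P ^ (k - 1) :=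
      le_mul_sum_of_le_mul_add (sigma2_nonneg_s8 P) he1 (fun s hs =>
        (norm_sub_average_le_sigma2_mul_add hP _ _ (hdev · s hs)).trans_eq (by ring)) ht
    _ = _ := by ring

/-- network-effect bound for OD-ADMM via distributed gradient descent:
`‖θ_t - x_{i,t}‖ ≤ 2 √n (L_f + ζ^max) Σ_{k=1}^{t-1} α_{t-k} σ₂(P)^{k-1}`. -/
theorem stmt_8 {n d : ℕ} (P : Matrix (Fin n) (Fin n) ℝ)
    (hPnn : ∀ i j, 0 ≤ P i j)
    (hProw : ∀ i, ∑ j, P i j = 1)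
    (hPcol : ∀ j, ∑ i, P i j = 1)
    (χ : Set (EuclideanSpace ℝ (Fin d)))
    (hχcl : IsClosed χ) (hχconv : Convex ℝ χ) (hχ0 : (0 : EuclideanSpace ℝ (Fin d)) ∈ χ)
    (proj : EuclideanSpace ℝ (Fin d) → EuclideanSpace ℝ (Fin d))
    (hprojmem : ∀ u, proj u ∈ χ)
    (hprojclosest : ∀ u, ∀ w ∈ χ, ‖u - proj u‖ ≤ ‖u - w‖)
    (α : ℕ → ℝ) (hαpos : ∀ t : ℕ, 1 ≤ t → 0 < α t)
    (hαmono : ∀ s t : ℕ, 1 ≤ s → s ≤ t → α t ≤ α s)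
    (m : Fin n → ℕ)
    (A : ∀ i : Fin n, Matrix (Fin (m i)) (Fin d) ℝ)
    (g : Fin n → ℕ → EuclideanSpace ℝ (Fin d))
    (lam : ∀ i : Fin n, ℕ → EuclideanSpace ℝ (Fin (m i)))
    (Lf ζmax : ℝ)
    (hg : ∀ i : Fin n, ∀ t : ℕ, 1 ≤ t → ‖g i t‖ ≤ Lf)
    (hlam : ∀ i : Fin n, ∀ t : ℕ, 1 ≤ t →
      ‖Matrix.toEuclideanLin (A i)ᵀ (lam i t)‖ ≤ ζmax)
    (x h : Fin n → ℕ → EuclideanSpace ℝ (Fin d)) (θ : ℕ → EuclideanSpace ℝ (Fin d))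
    (hx1 : ∀ i, x i 1 = 0)
    (hhrec : ∀ i : Fin n, ∀ t : ℕ, 1 ≤ t →
      h i (t + 1) = (∑ j, P j i • x j t)
        - α t • (g i t + Matrix.toEuclideanLin (A i)ᵀ (lam i (t + 1))))
    (hxproj : ∀ i : Fin n, ∀ t : ℕ, 1 ≤ t → x i (t + 1) = proj (h i (t + 1)))
    (hθ : ∀ t : ℕ, θ t = (n : ℝ)⁻¹ • ∑ i, x i t)
    (i : Fin n) (t : ℕ) (ht : 1 ≤ t) :
    ‖θ t - x i t‖ ≤ 2 * Real.sqrt n * (Lf + ζmax)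
      * ∑ k ∈ Finset.Icc 1 (t - 1), α (t - k) * sigma2 P ^ (k - 1) :=
  stmt_8_general P hPnn hProw hPcol χ hχconv hχ0 proj hprojmem hprojclosest α hαpos m A g lam Lf
    ζmax hg hlam x h θ hx1 hhrec hxproj hθ i t ht
end
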